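/- Let Σ be a finite alphabet, let P_1, …, P_k and Q_1, …, Q_k be n-dimensional product distributions over Σ, let w_1, …, w_k and v_1, …, v_k be nonnegative weights each summing to 1, and let P = Σ_i w_i P_i and Q = Σ_i v_i Q_i be the corresponding mixtures. Fix 1 ≤ j < n, and for x ∈ Σ^j define u_j(x) ∈ ℝ^{2k} by u_j(x)_i = w_i P_i^{≤j}(x) and u_j(x)_{k+i} = −v_i Q_i^{≤j}(x) for 1 ≤ i ≤ k. Suppose S ⊆ Σ^j is a set of assignments such that {u_j(x) : x ∈ S} spans the same subspace of ℝ^{2k} as {u_j(x) : x ∈ Σ^j}. If P^{≤j+1}(x,y) = Q^{≤j+1}(x,y) for every x ∈ S and every y ∈ Σ, then P^{≤j+1}(x,y) = Q^{≤j+1}(x,y) for every x ∈ Σ^j and every y ∈ Σ. -/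

import Mathlib

open Finset

/-- The coefficient vector `u_j(x) ∈ ℝ^{2k}` associated with weighted product
distributions: coordinate `i ≤ k` is `w_i P_i^{≤j}(x)` and coordinate `k+i` is
`−v_i Q_i^{≤j}(x)`, where `P_i^{≤j}(x) = ∏_{t=1}^j p_{i,t}(x_t)`. -/
noncomputable def uVec {A : Type*} {k n : ℕ}
    (p q : Fin k → Fin n → A → ℝ) (w v : Fin k → ℝ)
    (j : ℕ) (hjn : j ≤ n) (x : Fin j → A) : (Fin k ⊕ Fin k) → ℝ :=
  Sum.elim (fun i => w i * ∏ t : Fin j, p i (Fin.castLE hjn t) (x t))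
           (fun i => -(v i * ∏ t : Fin j, q i (Fin.castLE hjn t) (x t)))

/-- The prefix marginal on the first `j` coordinates of the mixture with weights `w`
of the product distributions with factor distributions `p i`:
`P^{≤j}(x) = Σ_i w_i ∏_{t=1}^j p_{i,t}(x_t)`. -/
noncomputable def mixMarg {A : Type*} {k n : ℕ}
    (p : Fin k → Fin n → A → ℝ) (w : Fin k → ℝ)
    (j : ℕ) (hjn : j ≤ n) (x : Fin j → A) : ℝ :=
  ∑ i, w i * ∏ t : Fin j, p i (Fin.castLE hjn t) (x t)

/-
The difference `P^{≤j+1}(x,y) - Q^{≤j+1}(x,y)` is the value at `u_j(x)` of a linear functional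
on `ℝ^{2k}` depending only on `y`: pairing with the vector of next-coordinate probabilities
`(p_{i,j+1}(y))_i, (q_{i,j+1}(y))_i`. This functional vanishes on `u_j(S)` by hypothesis, hence
on its span, which contains every `u_j(x)`.
-/

section PrefixMarginal

variable {A : Type*} {k n : ℕ}

theorem mixMarg_snoc (p : Fin k → Fin n → A → ℝ) (w : Fin k → ℝ) (j : ℕ) (hjn : j + 1 ≤ n)
    (x : Fin j → A) (y : A) :
    mixMarg p w (j + 1) hjn (Fin.snoc x y) =
      ∑ i, (w i * ∏ t : Fin j, p i (Fin.castLE (Nat.le_of_succ_le hjn) t) (x t)) *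
        p i (Fin.castLE hjn (Fin.last j)) y := by
  simp only [mixMarg, Fin.prod_univ_castSucc, Fin.snoc_castSucc, Fin.snoc_last, mul_assoc]
  rfl

def nextFactorVec (p q : Fin k → Fin n → A → ℝ) {j : ℕ} (hjn : j + 1 ≤ n) (y : A) :
    Fin k ⊕ Fin k → ℝ :=
  Sum.elim (fun i => p i (Fin.castLE hjn (Fin.last j)) y)
    (fun i => q i (Fin.castLE hjn (Fin.last j)) y)

theorem linearCombination_nextFactorVec_uVec (p q : Fin k → Fin n → A → ℝ) (w v : Fin k → ℝ)
    (j : ℕ) (hjn : j + 1 ≤ n) (x : Fin j → A) (y : A) :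
    Fintype.linearCombination ℝ (nextFactorVec p q hjn y) (uVec p q w v j (Nat.le_of_succ_le hjn) x) =
      mixMarg p w (j + 1) hjn (Fin.snoc x y) - mixMarg q v (j + 1) hjn (Fin.snoc x y) := by
  simp only [Fintype.linearCombination_apply, Fintype.sum_sum_type, uVec, nextFactorVec,
    Sum.elim_inl, Sum.elim_inr, smul_eq_mul, neg_mul, sum_neg_distrib, mixMarg_snoc]
  ring

end PrefixMarginal

/-- if `{u_j(x) : x ∈ S}` spans the same subspace of `ℝ^{2k}` as
`{u_j(x) : x ∈ Σ^j}`, and the `(j+1)`-st prefix marginals of the two mixtures agree on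
all `(x, y)` with `x ∈ S`, `y ∈ Σ`, then they agree on all of `Σ^{j+1}`. -/
theorem mixture_marginals_eq_of_eq_on_spanning_set
    (A : Type*) (k n : ℕ)
    (p q : Fin k → Fin n → A → ℝ)
    (w v : Fin k → ℝ)
    (j : ℕ) (hjn : j + 1 ≤ n)
    (S : Set (Fin j → A))
    (hspan : Submodule.span ℝ (uVec p q w v j (by omega : j ≤ n) '' S)
           = Submodule.span ℝ (Set.range (uVec p q w v j (by omega : j ≤ n))))
    (hS : ∀ x ∈ S, ∀ y : A,
      mixMarg p w (j + 1) hjn (Fin.snoc x y) = mixMarg q v (j + 1) hjn (Fin.snoc x y)) :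
    ∀ (x : Fin j → A) (y : A),
      mixMarg p w (j + 1) hjn (Fin.snoc x y) = mixMarg q v (j + 1) hjn (Fin.snoc x y) := by
  intro x y
  have hvanish : Set.EqOn (Fintype.linearCombination ℝ (nextFactorVec p q hjn y))
      (0 : (Fin k ⊕ Fin k → ℝ) →ₗ[ℝ] ℝ) (uVec p q w v j (Nat.le_of_succ_le hjn) '' S) := by
    rintro _ ⟨z, hz, rfl⟩
    rw [linearCombination_nextFactorVec_uVec, hS z hz y, sub_self, LinearMap.zero_apply]
  have hx := LinearMap.eqOn_span hvanish (hspan ▸ Submodule.subset_span (Set.mem_range_self x))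
  rw [linearCombination_nextFactorVec_uVec, LinearMap.zero_apply, sub_eq_zero] at hx
  exact hx
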